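/- Let G = ZMod 2 act on the finite set A, and suppose the nontrivial element σ ∈ G has at most one fixed point in A. Then for any two twisted 1-cocycles δ₁ and δ₂, the representations ρ(δ₁) and ρ(δ₂) are isomorphic (i.e. there exists a ℂ-linear automorphism φ of A → ℂ with φ ∘ ρ(δ₁)(g) = ρ(δ₂)(g) ∘ φ for all g ∈ G) if and only if δ₁ · δ₂⁻¹ is a coboundary. -/

import Mathlib

section

variable {G A : Type*} [AddCommGroup G] [Fintype A] [DecidableEq A] [AddAction G A]

/-- A twisted 1-cocycle of `G` with values in `(ℂˣ)^A`. -/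
def IsCocycle (δ : G → A → ℂˣ) : Prop :=
  ∀ (g h : G) (a : A), δ (g + h) a = δ g (h +ᵥ a) * δ h a

/-- A coboundary. -/
def IsCoboundary (δ : G → A → ℂˣ) : Prop :=
  ∃ c : A → ℂˣ, ∀ (g : G) (a : A), δ g a = c (g +ᵥ a) * (c a)⁻¹

/-- The linear endomorphism `ρ(δ)(g)` of `A → ℂ` determined on the standard basis
`(e_a)_{a ∈ A}` by `ρ(δ)(g)(e_a) = δ(g)(a) • e_{g • a}`. -/
noncomputable def rho (δ : G → A → ℂˣ) (g : G) : (A → ℂ) →ₗ[ℂ] (A → ℂ) :=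
  (Pi.basisFun ℂ A).constr ℂ fun a => ((δ g a : ℂ) • Pi.basisFun ℂ A (g +ᵥ a))

end

/-!
If `δ₁ δ₂⁻¹ = c(g • a) c(a)⁻¹`, the diagonal operator `e_a ↦ c(a)⁻¹ e_a` intertwines `ρ(δ₁)` and
`ρ(δ₂)`. Conversely, isomorphic representations have equal characters, and the trace of `ρ(δ)(σ)`
is the sum of `δ(σ)(a)` over the fixed points `a` of `σ`; with at most one fixed point this forces
`δ₁ δ₂⁻¹` to be trivial at the fixed points of `σ`. A `ℤ/2`-cocycle with this property is a
coboundary: on each free orbit `{a, σ a}` put `c = 1` at one point and `c = δ(σ)(σ a)` at the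
other, which is consistent because `δ(σ)(σ a) δ(σ)(a) = δ(0)(a) = 1`.
-/

section

variable {G A : Type*} [AddCommGroup G] [AddAction G A]

theorem IsCocycle.apply_zero {δ : G → A → ℂˣ} (h : IsCocycle δ) (a : A) : δ 0 a = 1 := by
  simpa [add_zero, zero_vadd] using h 0 0 a

theorem IsCocycle.mul_inv {δ₁ δ₂ : G → A → ℂˣ} (h₁ : IsCocycle δ₁) (h₂ : IsCocycle δ₂) :
    IsCocycle (fun g a => δ₁ g a * (δ₂ g a)⁻¹) := by
  intro g h a
  simp only [h₁ g h a, h₂ g h a, _root_.mul_inv]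
  exact mul_mul_mul_comm _ _ _ _

variable [Fintype A] [DecidableEq A]

theorem rho_single (δ : G → A → ℂˣ) (g : G) (a : A) :
    rho δ g (Pi.single a 1) = (δ g a : ℂ) • Pi.single (g +ᵥ a) 1 := by
  rw [← Pi.basisFun_apply ℂ, rho, Module.Basis.constr_basis, Pi.basisFun_apply]

theorem trace_rho (δ : G → A → ℂˣ) (g : G) :
    LinearMap.trace ℂ _ (rho δ g) = ∑ a with g +ᵥ a = a, (δ g a : ℂ) := by
  rw [LinearMap.trace_eq_matrix_trace ℂ (Pi.basisFun ℂ A), Matrix.trace, Finset.sum_filter]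
  refine Finset.sum_congr rfl fun a _ => ?_
  rw [Matrix.diag_apply, LinearMap.toMatrix_apply, Pi.basisFun_repr, Pi.basisFun_apply,
    rho_single]
  by_cases ha : g +ᵥ a = a <;> simp [ha]

theorem trace_rho_of_subsingleton_fixedPoints (δ : G → A → ℂˣ) {g : G}
    (hfix : {a : A | g +ᵥ a = a}.Subsingleton) {a : A} (ha : g +ᵥ a = a) :
    LinearMap.trace ℂ _ (rho δ g) = δ g a := by
  have hfilter : ({b | g +ᵥ b = b} : Finset A) = {a} :=
    Finset.eq_singleton_iff_unique_mem.mpr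
      ⟨by simpa using ha, fun b hb => hfix (by simpa using hb) ha⟩
  rw [trace_rho, hfilter, Finset.sum_singleton]

theorem trace_rho_eq_of_intertwining {δ₁ δ₂ : G → A → ℂˣ} {g : G}
    (φ : (A → ℂ) ≃ₗ[ℂ] (A → ℂ)) (hφ : ∀ x, φ (rho δ₁ g x) = rho δ₂ g (φ x)) :
    LinearMap.trace ℂ _ (rho δ₁ g) = LinearMap.trace ℂ _ (rho δ₂ g) := by
  have hconj : φ.conj (rho δ₁ g) = rho δ₂ g := by
    ext x
    simp [LinearEquiv.conj_apply, hφ]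
  rw [← hconj, LinearMap.trace_conj']

theorem exists_intertwining_of_isCoboundary {δ₁ δ₂ : G → A → ℂˣ}
    (h : IsCoboundary (fun g a => δ₁ g a * (δ₂ g a)⁻¹)) :
    ∃ φ : (A → ℂ) ≃ₗ[ℂ] (A → ℂ), ∀ (g : G) (x : A → ℂ), φ (rho δ₁ g x) = rho δ₂ g (φ x) := by
  obtain ⟨c, hc⟩ := h
  let φ : (A → ℂ) ≃ₗ[ℂ] (A → ℂ) := .piCongrRight fun a => .smulOfUnit (c a)⁻¹
  have hφ (a : A) : φ (Pi.single a 1) = (c a)⁻¹ • Pi.single a 1 := by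
    ext b
    by_cases hb : b = a <;> simp [φ, hb, LinearEquiv.smulOfUnit]
  have hcomm (g : G) : φ.toLinearMap ∘ₗ rho δ₁ g = rho δ₂ g ∘ₗ φ.toLinearMap := by
    refine (Pi.basisFun ℂ A).ext fun a => ?_
    have hca : δ₁ g a * (c (g +ᵥ a))⁻¹ = δ₂ g a * (c a)⁻¹ := by
      have := hc g a
      rw [mul_inv_eq_mul_inv_iff_mul_eq_mul] at this ⊢
      rw [this, mul_comm]
    simp only [Pi.basisFun_apply, LinearMap.coe_comp, LinearEquiv.coe_coe, Function.comp_apply,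
      rho_single, map_smul, hφ, smul_smul, Units.smul_def]
    rw [← Units.val_mul, ← Units.val_mul, hca, mul_comm]
  exact ⟨φ, fun g x => LinearMap.congr_fun (hcomm g) x⟩

end

section

variable {A : Type*} [AddAction (ZMod 2) A]

theorem zmod_two_one_vadd_one_vadd (a : A) : (1 : ZMod 2) +ᵥ ((1 : ZMod 2) +ᵥ a) = a := by
  rw [vadd_vadd, show (1 + 1 : ZMod 2) = 0 from rfl, zero_vadd]

theorem IsCocycle.zmod_two_apply_one_mul {δ : ZMod 2 → A → ℂˣ} (h : IsCocycle δ) (a : A) :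
    δ 1 ((1 : ZMod 2) +ᵥ a) * δ 1 a = 1 := by
  rw [← h 1 1 a]
  exact h.apply_zero a

theorem IsCocycle.isCoboundary_of_zmod_two {δ : ZMod 2 → A → ℂˣ} (h : IsCocycle δ)
    (hfix : ∀ a : A, (1 : ZMod 2) +ᵥ a = a → δ 1 a = 1) : IsCoboundary δ := by
  let _ : LinearOrder A := WellOrderingRel.isWellOrder.linearOrder
  refine ⟨fun a => if a ≤ (1 : ZMod 2) +ᵥ a then 1 else δ 1 ((1 : ZMod 2) +ᵥ a), fun g a => ?_⟩
  rcases (by decide : ∀ g : ZMod 2, g = 0 ∨ g = 1) g with rfl | rfl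
  · simp [h.apply_zero]
  simp only [zmod_two_one_vadd_one_vadd]
  rcases lt_trichotomy a ((1 : ZMod 2) +ᵥ a) with hlt | heq | hgt
  · simp [hlt.le, hlt.not_ge]
  · simp [← heq, hfix a heq.symm]
  · simp only [hgt.not_ge, hgt.le, if_true, if_false, one_mul]
    exact eq_inv_of_mul_eq_one_right (h.zmod_two_apply_one_mul a)

end

/-- let `G = ZMod 2` act on the finite set `A` and suppose the nontrivial
element `σ = 1` has at most one fixed point in `A`.  Then for twisted 1-cocycles `δ₁`,
`δ₂`, the representations `ρ(δ₁)` and `ρ(δ₂)` are isomorphic if and only if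
`δ₁ · δ₂⁻¹` is a coboundary. -/
theorem rho_isomorphic_iff_cohomologous_of_zmod2
    {A : Type*} [Fintype A] [DecidableEq A] [AddAction (ZMod 2) A]
    (hfix : {a : A | (1 : ZMod 2) +ᵥ a = a}.Subsingleton)
    (δ₁ δ₂ : ZMod 2 → A → ℂˣ) (h₁ : IsCocycle δ₁) (h₂ : IsCocycle δ₂) :
    (∃ φ : (A → ℂ) ≃ₗ[ℂ] (A → ℂ),
        ∀ (g : ZMod 2) (x : A → ℂ), φ (rho δ₁ g x) = rho δ₂ g (φ x)) ↔
      IsCoboundary (fun g a => δ₁ g a * (δ₂ g a)⁻¹) := by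
  refine ⟨fun ⟨φ, hφ⟩ => (h₁.mul_inv h₂).isCoboundary_of_zmod_two fun a ha => ?_,
    exists_intertwining_of_isCoboundary⟩
  have htrace := trace_rho_eq_of_intertwining φ (hφ 1)
  rw [trace_rho_of_subsingleton_fixedPoints δ₁ hfix ha,
    trace_rho_of_subsingleton_fixedPoints δ₂ hfix ha] at htrace
  rw [Units.ext htrace, mul_inv_cancel]
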